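/- A consequence relation ⊢ on a sentential language is substitution-invariant, monotonic and transitive if and only if it has a strong intersective q-mixed semantics, i.e. a strong semantics whose truth-relation is the intersection of a family of mixed truth-relations |≡_{D_p^λ,D_c^λ} with D_c^λ ⊆ D_p^λ for every λ. -/

import Mathlib

/-!
A monotonic transitive consequence relation is the intersection of the mixed relations
`|≡_{Γ', L \ Δ'}` indexed by its counterexamples `Γ' ⊬ Δ'` with `Γ' ∪ Δ' = L`, and the
covering condition gives `L \ Δ' ⊆ Γ'`. Taking the formulae themselves as truth values and
the connectives as their own truth functions turns valuations into substitutions, so for a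
substitution-invariant relation this intersection is a strong semantics. Conversely, any
such semantics is substitution-invariant because the value of `σ F` at `v` is the value of
`F` at `v ∘ σ`.
-/

universe u v w x

/-- Mixed truth-relation. -/
def Mixed {V : Type*} (Dp Dc : Set V) (γ δ : Set V) : Prop :=
  γ ⊆ Dp → (δ ∩ Dc).Nonempty

def Monotonic {L : Type*} (Cons : Set L → Set L → Prop) : Prop :=
  ∀ ⦃Γ₁ Γ₂ Δ₁ Δ₂ : Set L⦄, Γ₁ ⊆ Γ₂ → Δ₁ ⊆ Δ₂ → Cons Γ₁ Δ₁ → Cons Γ₂ Δ₂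

def ReflRel {L : Type*} (Cons : Set L → Set L → Prop) : Prop :=
  ∀ F : L, Cons {F} {F}

def TransRel {L : Type*} (Cons : Set L → Set L → Prop) : Prop :=
  ∀ Γ Δ : Set L, ¬ Cons Γ Δ →
    ∃ Γ' Δ' : Set L, Γ ⊆ Γ' ∧ Δ ⊆ Δ' ∧ ¬ Cons Γ' Δ' ∧ Γ' ∪ Δ' = Set.univ

def LRPermeable {L : Type*} (Cons : Set L → Set L → Prop) : Prop :=
  ∀ Γ Δ S : Set L, Cons (Γ ∪ S) Δ → Cons Γ (S ∪ Δ)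

def RLPermeable {L : Type*} (Cons : Set L → Set L → Prop) : Prop :=
  ∀ Γ Δ S : Set L, Cons Γ (S ∪ Δ) → Cons (Γ ∪ S) Δ

def Permeable {L : Type*} (Cons : Set L → Set L → Prop) : Prop :=
  LRPermeable Cons ∨ RLPermeable Cons

def CompactRel {L : Type*} (Cons : Set L → Set L → Prop) : Prop :=
  ∀ Γ Δ : Set L, Cons Γ Δ →
    ∃ Γ' Δ' : Set L, Γ' ⊆ Γ ∧ Δ' ⊆ Δ ∧ Γ'.Finite ∧ Δ'.Finite ∧ Cons Γ' Δ'

/-- Sound and complete intersective mixed semantics. -/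
def IsIMS {L V W Λ : Type*} (Cons : Set L → Set L → Prop)
    (interp : L → W → V) (Dp Dc : Λ → Set V) : Prop :=
  ∀ Γ Δ : Set L, Cons Γ Δ ↔
    ∀ (w : W) (l : Λ), Mixed (Dp l) (Dc l)
      ((fun F => interp F w) '' Γ) ((fun F => interp F w) '' Δ)

/-- Sound and complete mixed semantics (single pair). -/
def IsMixedSem {L V W : Type*} (Cons : Set L → Set L → Prop)
    (interp : L → W → V) (Dp Dc : Set V) : Prop :=
  ∀ Γ Δ : Set L, Cons Γ Δ ↔
    ∀ w : W, Mixed Dp Dc ((fun F => interp F w) '' Γ) ((fun F => interp F w) '' Δ)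

/-- Formulae of a sentential language. -/
inductive Formula (A : Type u) (C : Type u) (ar : C → ℕ) : Type u
  | atom : A → Formula A C ar
  | conn : (c : C) → (Fin (ar c) → Formula A C ar) → Formula A C ar

/-- Substitution induced by a map from atoms to formulae. -/
def Formula.subst {A C : Type u} {ar : C → ℕ} (σ : A → Formula A C ar) :
    Formula A C ar → Formula A C ar
  | .atom a => σ a
  | .conn c Fs => .conn c (fun i => (Fs i).subst σ)

def SubstInvariant {A C : Type u} {ar : C → ℕ}
    (Cons : Set (Formula A C ar) → Set (Formula A C ar) → Prop) : Prop :=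
  ∀ (σ : A → Formula A C ar) (Γ Δ : Set (Formula A C ar)),
    Cons Γ Δ → Cons (Formula.subst σ '' Γ) (Formula.subst σ '' Δ)

/-- Evaluation of formulae from truth-functions and a valuation. -/
def evalF {A C : Type u} {ar : C → ℕ} {V : Type v}
    (tf : (c : C) → (Fin (ar c) → V) → V) (v : A → V) : Formula A C ar → V
  | .atom a => v a
  | .conn c Fs => tf c (fun i => evalF tf v (Fs i))

/-- Truth-functionality of an interpretation w.r.t. truth-functions. -/
def Compositional {A C : Type u} {ar : C → ℕ} {V : Type v} {W : Type w}
    (interp : Formula A C ar → W → V)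
    (tf : (c : C) → (Fin (ar c) → V) → V) : Prop :=
  ∀ (c : C) (Fs : Fin (ar c) → Formula A C ar) (w : W),
    interp (Formula.conn c Fs) w = tf c (fun i => interp (Fs i) w)

/-- Regular connectives. -/
def RegularRel {A C : Type u} {ar : C → ℕ}
    (Cons : Set (Formula A C ar) → Set (Formula A C ar) → Prop) : Prop :=
  ∀ c : C, ∃ Bp Bc : Set (Set (Fin (ar c)) × Set (Fin (ar c))),
    ∀ (Γ Δ : Set (Formula A C ar)) (Fs : Fin (ar c) → Formula A C ar),
      (Cons (Γ ∪ {Formula.conn c Fs}) Δ ↔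
        ∀ B ∈ Bp, Cons (Γ ∪ Fs '' B.1) (Fs '' B.2 ∪ Δ)) ∧
      (Cons Γ ({Formula.conn c Fs} ∪ Δ) ↔
        ∀ B ∈ Bc, Cons (Γ ∪ Fs '' B.1) (Fs '' B.2 ∪ Δ))

open Set

section Mixed

variable {V : Type*} {Dp Dc : Set V} {γ δ : Set V}

theorem Mixed.mono {γ' δ' : Set V} (h : Mixed Dp Dc γ δ) (hγ : γ ⊆ γ') (hδ : δ ⊆ δ') :
    Mixed Dp Dc γ' δ' :=
  fun hγ' => (h (hγ.trans hγ')).mono (inter_subset_inter_left _ hδ)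

theorem not_mixed_iff : ¬ Mixed Dp Dc γ δ ↔ γ ⊆ Dp ∧ δ ⊆ Dcᶜ := by
  simp only [Mixed, Classical.not_imp, not_nonempty_iff_eq_empty, subset_compl_iff_disjoint_right,
    disjoint_iff_inter_eq_empty]

theorem mixed_compl_iff {Δ : Set V} : Mixed Dp Δᶜ γ δ ↔ (γ ⊆ Dp → ¬ δ ⊆ Δ) := by
  rw [← not_iff_not, not_mixed_iff, compl_compl, Classical.not_imp, not_not]

end Mixed

section IsIMS

variable {L V W Λ : Type*} {Cons : Set L → Set L → Prop} {interp : L → W → V}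
  {Dp Dc : Λ → Set V}

theorem IsIMS.monotonic (hsem : IsIMS Cons interp Dp Dc) : Monotonic Cons := by
  intro Γ₁ Γ₂ Δ₁ Δ₂ hΓ hΔ h
  rw [hsem] at h ⊢
  exact fun w l => (h w l).mono (image_mono hΓ) (image_mono hΔ)

/-- A failing valuation and index split `L` into the formulae whose value is in `Dp` and
those whose value is outside `Dc`; the two parts cover `L` because `Dc ⊆ Dp`. -/
theorem IsIMS.transRel (hsem : IsIMS Cons interp Dp Dc) (hD : ∀ l, Dc l ⊆ Dp l) :
    TransRel Cons := by
  intro Γ Δ hnc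
  rw [hsem] at hnc
  simp only [not_forall, not_mixed_iff, image_subset_iff] at hnc
  obtain ⟨w, l, hΓ, hΔ⟩ := hnc
  refine ⟨_, _, hΓ, hΔ, ?_, ?_⟩
  · rw [hsem]
    simp only [not_forall, not_mixed_iff]
    exact ⟨w, l, image_preimage_subset _ _, image_preimage_subset _ _⟩
  · rw [← preimage_union, compl_subset_iff_union.1 (compl_subset_compl.2 (hD l)), preimage_univ]

end IsIMS

section Formula

variable {A C : Type u} {ar : C → ℕ}

@[simp]
theorem Formula.subst_atom (F : Formula A C ar) : F.subst Formula.atom = F := by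
  induction F with
  | atom a => rfl
  | conn c Fs ih => simp only [Formula.subst, ih]

@[simp]
theorem evalF_conn (v : A → Formula A C ar) : evalF Formula.conn v = Formula.subst v := by
  funext F
  induction F with
  | atom a => rfl
  | conn c Fs ih => simp only [evalF, Formula.subst, ih]

theorem evalF_subst {V : Type*} (tf : (c : C) → (Fin (ar c) → V) → V) (v : A → V)
    (σ : A → Formula A C ar) (F : Formula A C ar) :
    evalF tf v (F.subst σ) = evalF tf (fun a => evalF tf v (σ a)) F := by
  induction F with
  | atom a => rfl
  | conn c Fs ih => simp only [evalF, Formula.subst, ih]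

variable {Cons : Set (Formula A C ar) → Set (Formula A C ar) → Prop}

theorem SubstInvariant.cons_iff_forall_subst (hsub : SubstInvariant Cons)
    {Γ Δ : Set (Formula A C ar)} :
    Cons Γ Δ ↔ ∀ σ : A → Formula A C ar, Cons (Formula.subst σ '' Γ) (Formula.subst σ '' Δ) :=
  ⟨fun h σ => hsub σ Γ Δ h, fun h => by simpa using h Formula.atom⟩

theorem IsIMS.substInvariant {V Λ : Type*} {tf : (c : C) → (Fin (ar c) → V) → V}
    {Dp Dc : Λ → Set V} (hsem : IsIMS Cons (fun F v => evalF tf v F) Dp Dc) :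
    SubstInvariant Cons := by
  intro σ Γ Δ h
  rw [hsem] at h ⊢
  intro v l
  simpa only [image_image, evalF_subst] using h (fun a => evalF tf v (σ a)) l

end Formula

section CoveringCounterexample

variable {L : Type*} {Cons : Set L → Set L → Prop}

variable (Cons) in
def CoveringCounterexample : Type _ :=
  {p : Set L × Set L // ¬ Cons p.1 p.2 ∧ p.1 ∪ p.2 = univ}

theorem CoveringCounterexample.compl_subset (p : CoveringCounterexample Cons) :
    p.1.2ᶜ ⊆ p.1.1 :=
  compl_subset_iff_union.2 (union_comm p.1.2 p.1.1 ▸ p.2.2)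

theorem cons_iff_forall_coveringCounterexample (hmono : Monotonic Cons) (htrans : TransRel Cons)
    {Γ Δ : Set L} : Cons Γ Δ ↔ ∀ p : CoveringCounterexample Cons, Mixed p.1.1 p.1.2ᶜ Γ Δ := by
  simp only [mixed_compl_iff]
  refine ⟨fun h p hΓ hΔ => p.2.1 (hmono hΓ hΔ h), fun h => ?_⟩
  by_contra hnc
  obtain ⟨Γ', Δ', hΓ, hΔ, hnc', hcover⟩ := htrans Γ Δ hnc
  exact h ⟨(Γ', Δ'), hnc', hcover⟩ hΓ hΔ

end CoveringCounterexample

/-- substitution-invariance + monotonicity + transitivity is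
equivalent to the existence of a strong intersective q-mixed semantics. -/
theorem statement_6 {A C : Type u} (ar : C → ℕ)
    (Cons : Set (Formula A C ar) → Set (Formula A C ar) → Prop) :
    (SubstInvariant Cons ∧ Monotonic Cons ∧ TransRel Cons) ↔
      ∃ (V : Type u) (tf : (c : C) → (Fin (ar c) → V) → V)
        (Λ : Type u) (Dp Dc : Λ → Set V),
        (∀ l : Λ, Dc l ⊆ Dp l) ∧
        ∀ Γ Δ : Set (Formula A C ar), Cons Γ Δ ↔
          ∀ (v : A → V) (l : Λ),
            Mixed (Dp l) (Dc l)
              ((fun F => evalF tf v F) '' Γ) ((fun F => evalF tf v F) '' Δ) := by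
  constructor
  · rintro ⟨hsub, hmono, htrans⟩
    refine ⟨Formula A C ar, Formula.conn, CoveringCounterexample Cons, fun p => p.1.1,
      fun p => p.1.2ᶜ, CoveringCounterexample.compl_subset, fun Γ Δ => ?_⟩
    simp only [evalF_conn]
    rw [hsub.cons_iff_forall_subst]
    simp only [cons_iff_forall_coveringCounterexample hmono htrans]
  · rintro ⟨V, tf, Λ, Dp, Dc, hD, hsem⟩
    exact ⟨IsIMS.substInvariant hsem, IsIMS.monotonic hsem, IsIMS.transRel hsem hD⟩
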